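/- Let n be an odd positive integer and a, b ∈ ℝ. Define 𝔊(x,y,z) = a·Q_n(x,y)·sin z + b·Q_n(x,z)·sin y, and let V be the vector field on ℝ³ given by V(x,y,z) = (𝔊(x,y,z), 𝔊(y,z,x), 𝔊(z,x,y)). Then the divergence of V satisfies ∇·V(x,y,z) = n·(a + (−1)^{(n+1)/2} b)·(Q_{n−1}(x,y)·sin z + Q_{n−1}(y,z)·sin x + Q_{n−1}(z,x)·sin y) for all (x,y,z) ∈ ℝ³. -/

import Mathlib

noncomputable section

open Real

/-- The standard harmonic polynomial `P_n(x,y) = Re((x+iy)^n)`. -/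
def polyP (n : ℕ) (x y : ℝ) : ℝ := ((x + y * Complex.I) ^ n).re

/-- The standard harmonic polynomial `Q_n(x,y) = Im((x+iy)^n)`. -/
def polyQ (n : ℕ) (x y : ℝ) : ℝ := ((x + y * Complex.I) ^ n).im

/-- Partial derivative in the `i`-th coordinate direction. -/
def pd (i : Fin 3) (F : (Fin 3 → ℝ) → ℝ) : (Fin 3 → ℝ) → ℝ :=
  fun v => deriv (fun t => F (Function.update v i t)) (v i)

/-- Divergence of a vector field on ℝ³. -/
def div3 (V : (Fin 3 → ℝ) → (Fin 3 → ℝ)) : (Fin 3 → ℝ) → ℝ :=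
  fun v => pd 0 (fun w => V w 0) v + pd 1 (fun w => V w 1) v + pd 2 (fun w => V w 2) v

/-- Curl of a vector field on ℝ³. -/
def curl3 (V : (Fin 3 → ℝ) → (Fin 3 → ℝ)) : (Fin 3 → ℝ) → (Fin 3 → ℝ) :=
  fun v => ![pd 1 (fun w => V w 2) v - pd 2 (fun w => V w 1) v,
             pd 2 (fun w => V w 0) v - pd 0 (fun w => V w 2) v,
             pd 0 (fun w => V w 1) v - pd 1 (fun w => V w 0) v]

/-- Laplacian of a scalar function on ℝ³. -/
def lap3 (F : (Fin 3 → ℝ) → ℝ) : (Fin 3 → ℝ) → ℝ :=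
  fun v => pd 0 (pd 0 F) v + pd 1 (pd 1 F) v + pd 2 (pd 2 F) v

/-!
Each component of `V` is differentiated only in its first argument, and
`∂ₓ Q_n(x, y) = n Q_{n-1}(x, y)`, which gives `n a Q_{n-1}(x,y) sin z + n b Q_{n-1}(x,z) sin y`
plus its cyclic shifts. For even `m = 2k`, `y + ix = i · conj (x + iy)` gives
`Q_m(y, x) = -(-1)^k Q_m(x, y)`, so each `b`-term `Q_{n-1}(x, z) sin y` merges with the `a`-term
`Q_{n-1}(z, x) sin y` with the sign `(-1)^(k+1) = (-1)^((n+1)/2)`.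
-/

theorem hasDerivAt_polyQ_left (n : ℕ) (x y : ℝ) :
    HasDerivAt (fun t => polyQ n t y) (n * polyQ (n - 1) x y) x := by
  have hpow : HasDerivAt (fun z : ℂ => (z + y * Complex.I) ^ n)
      (n * ((x : ℂ) + y * Complex.I) ^ (n - 1)) x := by
    simpa using ((hasDerivAt_id (x : ℂ)).add_const ((y : ℂ) * Complex.I)).fun_pow n
  simpa [polyQ, Complex.mul_im, Function.comp_def] using
    Complex.imCLM.hasFDerivAt.comp_hasDerivAt x hpow.comp_ofReal

theorem polyQ_two_mul_swap (k : ℕ) (x y : ℝ) :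
    polyQ (2 * k) y x = -(-1) ^ k * polyQ (2 * k) x y := by
  have hrot : (y : ℂ) + x * Complex.I = Complex.I * starRingEnd ℂ ((x : ℂ) + y * Complex.I) := by
    simp [Complex.ext_iff]
  have hI : Complex.I ^ (2 * k) = (((-1 : ℝ) ^ k : ℝ) : ℂ) := by
    rw [pow_mul, Complex.I_sq]; push_cast; rfl
  rw [polyQ, polyQ, hrot, mul_pow, ← map_pow, hI, Complex.im_ofReal_mul, Complex.conj_im]
  ring

theorem pd_comp_coords (G : ℝ → ℝ → ℝ → ℝ) {i j l : Fin 3} (hj : j ≠ i) (hl : l ≠ i)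
    (v : Fin 3 → ℝ) :
    pd i (fun w => G (w i) (w j) (w l)) v = deriv (fun t => G t (v j) (v l)) (v i) := by
  simp only [pd, Function.update_self, Function.update_of_ne hj, Function.update_of_ne hl]

theorem div_formula_odd (n : ℕ) (hodd : Odd n) (a b : ℝ) :
    let G : ℝ → ℝ → ℝ → ℝ := fun x y z =>
      a * polyQ n x y * Real.sin z + b * polyQ n x z * Real.sin y
    let V : (Fin 3 → ℝ) → (Fin 3 → ℝ) := fun v =>
      ![G (v 0) (v 1) (v 2), G (v 1) (v 2) (v 0), G (v 2) (v 0) (v 1)]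
    ∀ v : Fin 3 → ℝ,
      div3 V v = (n : ℝ) * (a + (-1 : ℝ) ^ ((n + 1) / 2) * b) *
        (polyQ (n - 1) (v 0) (v 1) * Real.sin (v 2)
          + polyQ (n - 1) (v 1) (v 2) * Real.sin (v 0)
          + polyQ (n - 1) (v 2) (v 0) * Real.sin (v 1)) := by
  intro G V v
  have hG (x p q : ℝ) : deriv (fun t => G t p q) x =
      n * (a * polyQ (n - 1) x p * Real.sin q + b * polyQ (n - 1) x q * Real.sin p) := by
    have hderiv : HasDerivAt (fun t => G t p q) _ x :=
      (((hasDerivAt_polyQ_left n x p).const_mul a).mul_const (Real.sin q)).add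
        (((hasDerivAt_polyQ_left n x q).const_mul b).mul_const (Real.sin p))
    rw [hderiv.deriv]
    ring
  obtain ⟨k, rfl⟩ := hodd
  have hdeg : 2 * k + 1 - 1 = 2 * k := by omega
  have hsign : (2 * k + 1 + 1) / 2 = k + 1 := by omega
  change pd 0 (fun w => G (w 0) (w 1) (w 2)) v + pd 1 (fun w => G (w 1) (w 2) (w 0)) v
      + pd 2 (fun w => G (w 2) (w 0) (w 1)) v = _
  rw [pd_comp_coords G (by decide) (by decide), pd_comp_coords G (by decide) (by decide),
    pd_comp_coords G (by decide) (by decide), hG, hG, hG, hdeg, hsign,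
    polyQ_two_mul_swap k (v 2) (v 0), polyQ_two_mul_swap k (v 0) (v 1),
    polyQ_two_mul_swap k (v 1) (v 2)]
  ring
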